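/- arXiv:2409.10934 — 3 statements merged into one kernel-verified Lean document; each statement's English description precedes it below -/
import Mathlib

section
/- Let g : Z → ℝ be η-weakly convex and continuous on a Euclidean space Z, and let μ ∈ (0, 1/η). Then the gradient of the Moreau envelope, ∇g^μ(z̄) = (z̄ - prox_{μg}(z̄))/μ, is Lipschitz continuous with Lipschitz constant max{1/μ, η/(1 - μη)}. -/
/-!
Since `g` is `η`-weakly convex, `g + ‖· - x‖² / (2μ)` is `(1/μ - η)`-strongly convex, so its
minimiser `P x` satisfies a quadratic growth bound. Adding the bounds at `x` and `y` gives
`c ‖P x - P y‖² ≤ ⟪P x - P y, x - y⟫` with `c = 1 - μη > 0`: `P x - P y` lies in the ball of radius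
`‖x - y‖ / (2c)` about `(x - y) / (2c)`, and the triangle inequality bounds
`‖(x - y) - (P x - P y)‖` by `max 1 ((1 - c) / c) * ‖x - y‖`.
-/

open Filter Topology RealInnerProductSpace

section InnerProductSpace

variable {E : Type*} [NormedAddCommGroup E] [InnerProductSpace ℝ E]

lemma convexOn_const_sub_mul_inner (x : E) (ρ c : ℝ) :
    ConvexOn ℝ Set.univ fun z : E => c - ρ * ⟪z, x⟫ := by
  refine ⟨convex_univ, fun y _ z _ a b _ _ hab => le_of_eq ?_⟩
  simp only [inner_add_left, real_inner_smul_left, smul_eq_mul]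
  linear_combination (-c) * hab

lemma strongConvexOn_add_mul_norm_sub_sq {g : E → ℝ} {η : ℝ}
    (hg : ConvexOn ℝ Set.univ fun z => g z + η / 2 * ‖z‖ ^ 2) (x : E) (ρ : ℝ) :
    StrongConvexOn Set.univ (ρ - η) fun z => g z + ρ / 2 * ‖z - x‖ ^ 2 := by
  rw [strongConvexOn_iff_convex]
  have hsplit : (fun z => g z + ρ / 2 * ‖z - x‖ ^ 2 - (ρ - η) / 2 * ‖z‖ ^ 2) =
      fun z => (g z + η / 2 * ‖z‖ ^ 2) + (ρ / 2 * ‖x‖ ^ 2 - ρ * ⟪z, x⟫) := by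
    funext z
    rw [norm_sub_sq_real]
    ring
  rw [hsplit]
  exact hg.add (convexOn_const_sub_mul_inner x ρ _)

lemma StrongConvexOn.add_mul_norm_sub_sq_le_of_isMinOn {f : E → ℝ} {m : ℝ} {p : E}
    (hf : StrongConvexOn Set.univ m f) (hp : IsMinOn f Set.univ p) (z : E) :
    f p + m / 2 * ‖z - p‖ ^ 2 ≤ f z := by
  have hsmall : ∀ t ∈ Set.Ioo (0 : ℝ) 1, f p + (1 - t) * (m / 2 * ‖z - p‖ ^ 2) ≤ f z := by
    rintro t ⟨ht0, ht1⟩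
    have hconv := hf.2 (Set.mem_univ p) (Set.mem_univ z) (sub_pos.2 ht1).le ht0.le (by ring)
    have hmin : f p ≤ f ((1 - t) • p + t • z) := hp (Set.mem_univ _)
    rw [norm_sub_rev] at hconv
    simp only [smul_eq_mul] at hconv
    nlinarith
  have hlim : Tendsto (fun t : ℝ => f p + (1 - t) * (m / 2 * ‖z - p‖ ^ 2)) (𝓝[>] 0)
      (𝓝 (f p + m / 2 * ‖z - p‖ ^ 2)) :=
    tendsto_nhdsWithin_of_tendsto_nhds ((Continuous.tendsto' (by fun_prop) _ _ (by simp)))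
  exact le_of_tendsto hlim (mem_of_superset (Ioo_mem_nhdsGT one_pos) hsmall)

lemma norm_sub_le_max_mul_of_mul_norm_sq_le_inner {c : ℝ} (hc : 0 < c) {d e : E}
    (h : c * ‖e‖ ^ 2 ≤ ⟪e, d⟫) : ‖d - e‖ ≤ max 1 ((1 - c) / c) * ‖d‖ := by
  set k : ℝ := (2 * c)⁻¹ with hk_def
  have hk : 0 < k := by positivity
  have h2k : 2 * k = c⁻¹ := by rw [hk_def]; field_simp
  have hball : ‖e - k • d‖ ≤ k * ‖d‖ := by
    refine (pow_le_pow_iff_left₀ (norm_nonneg _) (by positivity) two_ne_zero).1 ?_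
    rw [norm_sub_sq_real, norm_smul, real_inner_smul_right, Real.norm_of_nonneg hk.le]
    have : ‖e‖ ^ 2 ≤ 2 * k * ⟪e, d⟫ := by rwa [h2k, le_inv_mul_iff₀ hc]
    nlinarith
  have hmax : |1 - k| + k = max 1 ((1 - c) / c) := by
    have : (1 - c) / c = 2 * k - 1 := by rw [h2k, sub_div, div_self hc.ne', inv_eq_one_div]
    rw [this]
    rcases le_total k 1 with hk1 | hk1
    · rw [abs_of_nonneg (by linarith), max_eq_left (by linarith)]; ring
    · rw [abs_of_nonpos (by linarith), max_eq_right (by linarith)]; ring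
  calc ‖d - e‖ = ‖(1 - k) • d - (e - k • d)‖ := by congr 1; module
    _ ≤ |1 - k| * ‖d‖ + k * ‖d‖ := by
        rw [← Real.norm_eq_abs, ← norm_smul]; exact (norm_sub_le _ _).trans (by gcongr)
    _ = max 1 ((1 - c) / c) * ‖d‖ := by rw [← hmax, add_mul]

lemma one_sub_mul_norm_sub_sq_le_inner_of_prox {g : E → ℝ} {η μ : ℝ} {P : E → E}
    (hg : ConvexOn ℝ Set.univ fun z => g z + η / 2 * ‖z‖ ^ 2) (hμ : 0 < μ)
    (hP : ∀ x z : E,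
      g (P x) + (1 / (2 * μ)) * ‖P x - x‖ ^ 2 ≤ g z + (1 / (2 * μ)) * ‖z - x‖ ^ 2)
    (x y : E) : (1 - μ * η) * ‖P x - P y‖ ^ 2 ≤ ⟪P x - P y, x - y⟫ := by
  have hρ : 1 / (2 * μ) = μ⁻¹ / 2 := by ring
  simp only [hρ] at hP
  have growth (x z : E) : g (P x) + μ⁻¹ / 2 * ‖P x - x‖ ^ 2 + (μ⁻¹ - η) / 2 * ‖z - P x‖ ^ 2 ≤
      g z + μ⁻¹ / 2 * ‖z - x‖ ^ 2 :=
    (strongConvexOn_add_mul_norm_sub_sq hg x μ⁻¹).add_mul_norm_sub_sq_le_of_isMinOn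
      (fun w _ => hP x w) z
  have hxy := growth x (P y)
  have hyx := growth y (P x)
  have hpar : ‖P y - x‖ ^ 2 + ‖P x - y‖ ^ 2 - ‖P x - x‖ ^ 2 - ‖P y - y‖ ^ 2 =
      2 * ⟪P x - P y, x - y⟫ := by
    simp only [norm_sub_sq_real, inner_sub_right, real_inner_comm x, real_inner_comm y]
    ring
  rw [norm_sub_rev (P y)] at hxy
  have hsum : (μ⁻¹ - η) * ‖P x - P y‖ ^ 2 ≤ μ⁻¹ * ⟪P x - P y, x - y⟫ := by
    linear_combination hxy + hyx + μ⁻¹ / 2 * hpar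
  calc (1 - μ * η) * ‖P x - P y‖ ^ 2 = μ * ((μ⁻¹ - η) * ‖P x - P y‖ ^ 2) := by
        field_simp
    _ ≤ μ * (μ⁻¹ * ⟪P x - P y, x - y⟫) := by gcongr
    _ = ⟪P x - P y, x - y⟫ := by field_simp

end InnerProductSpace

theorem stmt6_general {Z : Type*} [NormedAddCommGroup Z] [InnerProductSpace ℝ Z]
    (g : Z → ℝ) (η : ℝ) (hη : 0 < η)
    (hwc : ConvexOn ℝ Set.univ (fun z => g z + (η / 2) * ‖z‖ ^ 2))
    (μ : ℝ) (hμ : μ ∈ Set.Ioo (0 : ℝ) (1 / η))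
    (P : Z → Z)
    (hP : ∀ zb z : Z,
      g (P zb) + (1 / (2 * μ)) * ‖P zb - zb‖ ^ 2 ≤ g z + (1 / (2 * μ)) * ‖z - zb‖ ^ 2) :
    ∀ z₁ z₂ : Z,
      ‖μ⁻¹ • (z₁ - P z₁) - μ⁻¹ • (z₂ - P z₂)‖ ≤
        max (1 / μ) (η / (1 - μ * η)) * ‖z₁ - z₂‖ := by
  intro z₁ z₂
  obtain ⟨hμ0, hμη⟩ := hμ
  have hc : 0 < 1 - μ * η := by rw [lt_div_iff₀ hη] at hμη; linarith
  have hprox := norm_sub_le_max_mul_of_mul_norm_sq_le_inner hc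
    (one_sub_mul_norm_sub_sq_le_inner_of_prox hwc hμ0 hP z₁ z₂)
  calc ‖μ⁻¹ • (z₁ - P z₁) - μ⁻¹ • (z₂ - P z₂)‖ = μ⁻¹ * ‖(z₁ - z₂) - (P z₁ - P z₂)‖ := by
        rw [← smul_sub, norm_smul, Real.norm_of_nonneg (inv_nonneg.2 hμ0.le)]
        congr 2
        abel
    _ ≤ μ⁻¹ * (max 1 ((1 - (1 - μ * η)) / (1 - μ * η)) * ‖z₁ - z₂‖) := by gcongr
    _ = max (1 / μ) (η / (1 - μ * η)) * ‖z₁ - z₂‖ := by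
        rw [← mul_assoc, mul_max_of_nonneg _ _ (inv_nonneg.2 hμ0.le)]
        congr 2
        · ring
        · field_simp
          ring

/-- For `g` η-weakly convex and continuous and `μ ∈ (0, 1/η)`,
the gradient of the Moreau envelope, `∇g^μ(zb) = (zb - prox_{μg}(zb))/μ`, is Lipschitz
with constant `max {1/μ, η/(1 - μη)}`. -/
theorem stmt6 {Z : Type*} [NormedAddCommGroup Z] [InnerProductSpace ℝ Z]
    [FiniteDimensional ℝ Z]
    (g : Z → ℝ) (η : ℝ) (hη : 0 < η)
    (hwc : ConvexOn ℝ Set.univ (fun z => g z + (η / 2) * ‖z‖ ^ 2))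
    (hcont : Continuous g)
    (μ : ℝ) (hμ : μ ∈ Set.Ioo (0 : ℝ) (1 / η))
    (P : Z → Z)
    (hP : ∀ zb z : Z,
      g (P zb) + (1 / (2 * μ)) * ‖P zb - zb‖ ^ 2 ≤ g z + (1 / (2 * μ)) * ‖z - zb‖ ^ 2) :
    ∀ z₁ z₂ : Z,
      ‖μ⁻¹ • (z₁ - P z₁) - μ⁻¹ • (z₂ - P z₂)‖ ≤
        max (1 / μ) (η / (1 - μ * η)) * ‖z₁ - z₂‖ :=
  stmt6_general g η hη hwc μ hμ P hP
end

section
/- Let X be a Euclidean space, f : X → ℝ differentiable with L-Lipschitz gradient, φ : X → ℝ ∪ {+∞} proper lsc convex, and γ ∈ (0, 2(1-c)/L] for some c ∈ (0,1). Then for any x ∈ dom φ, the proximal gradient step x⁺ := prox_{γφ}(x - γ∇f(x)) satisfies the sufficient decrease (Armijo-type) inequality (f + φ)(x⁺) ≤ (f + φ)(x) - cγ · ((1/γ)‖x - x⁺‖)². -/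
/-!
The Lipschitz gradient gives the descent lemma
`f x⁺ ≤ f x - ⟪∇f x, x - x⁺⟫ + (L/2)‖x - x⁺‖²`. Comparing the prox objective at `x⁺` with its
values on the segment from `x⁺` to `x` and letting the step shrink shows that `(y - x⁺)/γ`, with
`y = x - γ∇f x`, is a subgradient of `φ` at `x⁺`; this gives
`φ x⁺ ≤ φ x - ‖x - x⁺‖²/γ + ⟪∇f x, x - x⁺⟫`. Adding the two, the inner products cancel and the
coefficient `L/2 - 1/γ` of `‖x - x⁺‖²` is at most `-c/γ` because `γL ≤ 2(1 - c)`.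
-/

variable {X : Type*} [NormedAddCommGroup X] [InnerProductSpace ℝ X]

/-- `φ` is proper: somewhere finite and nowhere `⊥`. -/
def ProperFun (φ : X → EReal) : Prop := (∃ x, φ x ≠ ⊤) ∧ ∀ x, φ x ≠ ⊥

/-- Convexity for an extended-real-valued function. -/
def ConvexFunE (φ : X → EReal) : Prop :=
  ∀ x y : X, ∀ t : ℝ, 0 ≤ t → t ≤ 1 →
    φ (t • x + (1 - t) • y) ≤ (t : EReal) * φ x + ((1 - t : ℝ) : EReal) * φ y

/-- `p` is the value of `prox_{γφ}` at `y`. -/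
def IsProx (φ : X → EReal) (γ : ℝ) (y p : X) : Prop :=
  ∀ x : X, φ p + (((1 / (2 * γ)) * ‖p - y‖ ^ 2 : ℝ) : EReal) ≤
    φ x + (((1 / (2 * γ)) * ‖x - y‖ ^ 2 : ℝ) : EReal)

open Set Filter Topology

theorem le_add_deriv_add_half_of_deriv_le {g g' : ℝ → ℝ} {M : ℝ}
    (hg : ∀ t, HasDerivAt g (g' t) t) (hbound : ∀ t ∈ Ico (0 : ℝ) 1, g' t ≤ g' 0 + M * t) :
    g 1 ≤ g 0 + g' 0 + M / 2 := by
  have hB : ∀ t, HasDerivAt (fun t => g 0 + t * g' 0 + M / 2 * t ^ 2) (g' 0 + M * t) t := by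
    intro t
    have hlin : HasDerivAt (fun t => g 0 + t * g' 0) (g' 0) t := by
      simpa using ((hasDerivAt_id t).mul_const (g' 0)).const_add (g 0)
    have hquad : HasDerivAt (fun t => M / 2 * t ^ 2) (M * t) t :=
      ((hasDerivAt_pow 2 t).const_mul (M / 2)).congr_deriv (by ring)
    exact hlin.add hquad
  have := image_le_of_deriv_right_le_deriv_boundary (a := 0) (b := 1)
    (fun t _ => (hg t).continuousAt.continuousWithinAt) (fun t _ => (hg t).hasDerivWithinAt)
    (by simp) (fun t _ => (hB t).continuousAt.continuousWithinAt)
    (fun t _ => (hB t).hasDerivWithinAt) hbound (right_mem_Icc.2 zero_le_one)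
  simpa using this

theorem descent_lemma [CompleteSpace X] {f : X → ℝ} {f' : X → X}
    (hf : ∀ x, HasGradientAt f (f' x) x) {L : ℝ} (hLip : ∀ x y, ‖f' x - f' y‖ ≤ L * ‖x - y‖)
    (x y : X) : f y ≤ f x + inner ℝ (f' x) (y - x) + L / 2 * ‖y - x‖ ^ 2 := by
  set d := y - x
  have hline : ∀ t : ℝ,
      HasDerivAt (fun t : ℝ => f (x + t • d)) (inner ℝ (f' (x + t • d)) d) t := by
    intro t
    have hpath : HasDerivAt (fun t : ℝ => x + t • d) d t := by
      simpa using ((hasDerivAt_id t).smul_const d).const_add x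
    simpa [Function.comp_def] using (hf (x + t • d)).hasFDerivAt.comp_hasDerivAt t hpath
  have hbound : ∀ t ∈ Ico (0 : ℝ) 1,
      inner ℝ (f' (x + t • d)) d ≤ inner ℝ (f' (x + (0 : ℝ) • d)) d + L * ‖d‖ ^ 2 * t := by
    rintro t ⟨ht, -⟩
    calc inner ℝ (f' (x + t • d)) d
        = inner ℝ (f' x) d + inner ℝ (f' (x + t • d) - f' x) d := by rw [inner_sub_left]; ring
      _ ≤ inner ℝ (f' x) d + L * ‖t • d‖ * ‖d‖ := by
          gcongr
          refine (real_inner_le_norm _ _).trans (mul_le_mul_of_nonneg_right ?_ (norm_nonneg d))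
          simpa using hLip (x + t • d) x
      _ = inner ℝ (f' (x + (0 : ℝ) • d)) d + L * ‖d‖ ^ 2 * t := by
          rw [norm_smul, Real.norm_of_nonneg ht, zero_smul, add_zero]
          ring
  have h := le_add_deriv_add_half_of_deriv_le hline hbound
  simp only [d, zero_smul, add_zero, one_smul, add_sub_cancel] at h
  linarith

theorem le_of_forall_mem_Ioc_le_add_mul {a b c : ℝ} (h : ∀ t ∈ Ioc (0 : ℝ) 1, a ≤ b + t * c) :
    a ≤ b := by
  have hlim : Tendsto (fun t : ℝ => b + t * c) (𝓝[>] 0) (𝓝 b) := by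
    have hcont : Continuous fun t : ℝ => b + t * c := by fun_prop
    simpa using (hcont.tendsto 0).mono_left nhdsWithin_le_nhds
  exact ge_of_tendsto hlim <| eventually_of_mem (Ioc_mem_nhdsGT zero_lt_one) h

theorem IsProx.ne_top {E : Type*} [NormedAddCommGroup E] {φ : E → EReal} {γ : ℝ} {y p x : E}
    (hp : IsProx φ γ y p) (hx : φ x ≠ ⊤) : φ p ≠ ⊤ := by
  intro hp_top
  have h := hp x
  rw [hp_top, EReal.top_add_of_ne_bot (EReal.coe_ne_bot _), top_le_iff] at h
  exact EReal.add_ne_top hx (EReal.coe_ne_top _) h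

theorem IsProx.add_inner_le {φ : X → EReal} (hconv : ConvexFunE φ) {a b γ : ℝ} {y p x : X}
    (hp : IsProx φ γ y p) (hpb : φ p = b) (hxa : φ x = a) :
    b + γ⁻¹ * inner ℝ (y - p) (x - p) ≤ a := by
  refine le_of_forall_mem_Ioc_le_add_mul (c := ‖x - p‖ ^ 2 / (2 * γ)) ?_
  rintro t ⟨ht0, ht1⟩
  have hz : φ (t • x + (1 - t) • p) ≤ ((t * a + (1 - t) * b : ℝ) : EReal) := by
    simpa [hxa, hpb] using hconv x p t ht0.le ht1
  have hprox := (hp (t • x + (1 - t) • p)).trans (add_le_add_left hz _)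
  rw [hpb] at hprox
  norm_cast at hprox
  have hexpand : t • x + (1 - t) • p - y = (p - y) + t • (x - p) := by module
  rw [hexpand, norm_add_sq_real, real_inner_smul_right, norm_smul, Real.norm_of_nonneg ht0.le]
    at hprox
  rw [← neg_sub p y, inner_neg_left]
  refine le_of_mul_le_mul_left ?_ ht0
  linear_combination hprox

theorem stmt11_general [FiniteDimensional ℝ X]
    (f : X → ℝ) (f' : X → X) (hf : ∀ x, HasGradientAt f (f' x) x)
    (L : ℝ) (hL : 0 < L) (hLip : ∀ x y : X, ‖f' x - f' y‖ ≤ L * ‖x - y‖)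
    (φ : X → EReal) (hproper : ProperFun φ)
    (hconv : ConvexFunE φ)
    (c : ℝ)
    (γ : ℝ) (hγ : γ ∈ Set.Ioc (0 : ℝ) (2 * (1 - c) / L))
    (x : X) (hx : φ x ≠ ⊤)
    (xp : X) (hxp : IsProx φ γ (x - γ • f' x) xp) :
    (f xp : EReal) + φ xp ≤
      (f x : EReal) + φ x - ((c * γ * ((1 / γ) * ‖x - xp‖) ^ 2 : ℝ) : EReal) := by
  obtain ⟨hγ0, hγL⟩ := hγ
  obtain ⟨a, hxa⟩ : ∃ a : ℝ, φ x = a := ⟨_, (EReal.coe_toReal hx (hproper.2 x)).symm⟩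
  obtain ⟨b, hpb⟩ : ∃ b : ℝ, φ xp = b :=
    ⟨_, (EReal.coe_toReal (hxp.ne_top hx) (hproper.2 xp)).symm⟩
  have hprox : b ≤ a - γ⁻¹ * ‖x - xp‖ ^ 2 + inner ℝ (f' x) (x - xp) := by
    have h := hxp.add_inner_le hconv hpb hxa
    rw [sub_right_comm, inner_sub_left, real_inner_smul_left, real_inner_self_eq_norm_sq, mul_sub,
      inv_mul_cancel_left₀ hγ0.ne'] at h
    linarith
  have hdesc : f xp ≤ f x - inner ℝ (f' x) (x - xp) + L / 2 * ‖x - xp‖ ^ 2 := by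
    have h := descent_lemma hf hLip x xp
    rwa [← neg_sub x xp, inner_neg_right, norm_neg, ← sub_eq_add_neg] at h
  have hgap : c * γ * ((1 / γ) * ‖x - xp‖) ^ 2 + L / 2 * ‖x - xp‖ ^ 2 ≤ γ⁻¹ * ‖x - xp‖ ^ 2 := by
    have hcoef : c / γ + L / 2 ≤ γ⁻¹ := by
      rw [le_div_iff₀ hL] at hγL
      field_simp
      linarith
    calc _ = (c / γ + L / 2) * ‖x - xp‖ ^ 2 := by field_simp
      _ ≤ _ := by gcongr
  rw [hxa, hpb]
  norm_cast
  linarith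

/-- sufficient decrease of the proximal gradient step. If `∇f` is `L`-Lipschitz,
`c ∈ (0,1)`, `γ ∈ (0, 2(1-c)/L]`, `x ∈ dom φ` and `x⁺ = prox_{γφ}(x - γ∇f(x))`, then
`(f+φ)(x⁺) ≤ (f+φ)(x) - cγ((1/γ)‖x - x⁺‖)²`. -/
theorem stmt11 [FiniteDimensional ℝ X]
    (f : X → ℝ) (f' : X → X) (hf : ∀ x, HasGradientAt f (f' x) x)
    (L : ℝ) (hL : 0 < L) (hLip : ∀ x y : X, ‖f' x - f' y‖ ≤ L * ‖x - y‖)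
    (φ : X → EReal) (hproper : ProperFun φ) (hlsc : LowerSemicontinuous φ)
    (hconv : ConvexFunE φ)
    (c : ℝ) (hc : c ∈ Set.Ioo (0 : ℝ) 1)
    (γ : ℝ) (hγ : γ ∈ Set.Ioc (0 : ℝ) (2 * (1 - c) / L))
    (x : X) (hx : φ x ≠ ⊤)
    (xp : X) (hxp : IsProx φ γ (x - γ • f' x) xp) :
    (f xp : EReal) + φ xp ≤
      (f x : EReal) + φ x - ((c * γ * ((1 / γ) * ‖x - xp‖) ^ 2 : ℝ) : EReal) :=
  stmt11_general f f' hf L hL hLip φ hproper hconv c γ hγ x hx xp hxp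
end

section
/- Let g : Z → ℝ be η-weakly convex and L-Lipschitz on a Euclidean space Z, and let 0 < μ' ≤ μ ≤ 1/(2η). Then for every z ∈ Z, g^{μ'}(z) - g^{μ}(z) ≤ (μ - μ')·L²·2 (more precisely, g^{μ'}(z) - g^μ(z) ≤ (μ - μ') L²/(2(1 - μη)²) ≤ 2(μ - μ')L²), i.e., the Moreau envelopes are monotone in μ with quantitative control: g^{μ}(z) ≤ g^{μ'}(z) ≤ g^{μ}(z) + (μ - μ')L²/(2(1-μη)²). -/
/-!
The lower bound holds because the penalty `‖w - z‖² / (2μ)` decreases in `μ`. For the upper bound,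
replace a candidate `w` for the index-`μ` envelope by `u = z + (μ'/μ)(w - z)`: its index-`μ'`
penalty is `(μ'/μ) ‖w - z‖² / (2μ)`, and the Lipschitz bound costs at most `L (1 - μ'/μ) ‖w - z‖`
for moving from `w` to `u`. Completing the square in `‖w - z‖` bounds the total excess by
`(μ - μ') L² / 2`, which is at most `(μ - μ') L² / (2(1 - μη)²)` since `0 ≤ μη ≤ 1/2`.
-/

open Set

noncomputable def moreauEnvelope {E : Type*} [SeminormedAddCommGroup E] (g : E → ℝ) (μ : ℝ)
    (z : E) : ℝ :=
  ⨅ w, g w + 1 / (2 * μ) * ‖w - z‖ ^ 2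

namespace moreauEnvelope

section Seminormed

variable {E : Type*} [SeminormedAddCommGroup E] {g : E → ℝ} {L μ μ' : ℝ}

lemma sub_le_objective (hg : ∀ a b, g a - g b ≤ L * ‖a - b‖) (hμ : 0 < μ) (z w : E) :
    g z - μ * L ^ 2 / 2 ≤ g w + 1 / (2 * μ) * ‖w - z‖ ^ 2 := by
  have hLip : g z - g w ≤ L * ‖w - z‖ := norm_sub_rev z w ▸ hg z w
  have hsquare : L * ‖w - z‖ ≤ 1 / (2 * μ) * ‖w - z‖ ^ 2 + μ * L ^ 2 / 2 := by
    have : 0 ≤ (‖w - z‖ - μ * L) ^ 2 / (2 * μ) := by positivity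
    have e : (‖w - z‖ - μ * L) ^ 2 / (2 * μ)
        = 1 / (2 * μ) * ‖w - z‖ ^ 2 - L * ‖w - z‖ + μ * L ^ 2 / 2 := by
      field_simp; ring
    linarith
  linarith

lemma bddBelow_range_objective (hg : ∀ a b, g a - g b ≤ L * ‖a - b‖) (hμ : 0 < μ) (z : E) :
    BddBelow (range fun w => g w + 1 / (2 * μ) * ‖w - z‖ ^ 2) :=
  ⟨g z - μ * L ^ 2 / 2, by rintro _ ⟨w, rfl⟩; exact sub_le_objective hg hμ z w⟩

lemma antitone_index (hg : ∀ a b, g a - g b ≤ L * ‖a - b‖) (hμ' : 0 < μ') (hle : μ' ≤ μ)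
    (z : E) : moreauEnvelope g μ z ≤ moreauEnvelope g μ' z := by
  refine ciInf_mono (bddBelow_range_objective hg (hμ'.trans_le hle) z) fun w => ?_
  have : 1 / (2 * μ) ≤ 1 / (2 * μ') := one_div_le_one_div_of_le (by positivity) (by linarith)
  gcongr

end Seminormed

section NormedSpace

variable {E : Type*} [SeminormedAddCommGroup E] [NormedSpace ℝ E] {g : E → ℝ} {L μ μ' : ℝ}

lemma le_objective_add (hg : ∀ a b, g a - g b ≤ L * ‖a - b‖) (hμ' : 0 < μ') (hle : μ' ≤ μ)
    (z w : E) :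
    moreauEnvelope g μ' z ≤ g w + 1 / (2 * μ) * ‖w - z‖ ^ 2 + (μ - μ') * L ^ 2 / 2 := by
  have hμ : 0 < μ := hμ'.trans_le hle
  set t := ‖w - z‖
  set u := z + (μ' / μ) • (w - z)
  have hdist_z : ‖u - z‖ = μ' / μ * t := by
    simp only [u, add_sub_cancel_left, norm_smul, Real.norm_eq_abs,
      abs_of_pos (div_pos hμ' hμ), t]
  have hdist_w : ‖u - w‖ = (1 - μ' / μ) * t := by
    have : u - w = (μ' / μ - 1) • (w - z) := by simp only [u, sub_smul, one_smul]; abel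
    rw [this, norm_smul, Real.norm_eq_abs,
      abs_of_nonpos (by rw [sub_nonpos, div_le_one hμ]; exact hle)]
    ring
  have hgu : g u ≤ g w + L * ((1 - μ' / μ) * t) := by linarith [hdist_w ▸ hg u w]
  have hpenalty : 1 / (2 * μ') * ‖u - z‖ ^ 2 = μ' / (2 * μ ^ 2) * t ^ 2 := by
    rw [hdist_z]; field_simp
  have hsquare : L * ((1 - μ' / μ) * t) + μ' / (2 * μ ^ 2) * t ^ 2 ≤
      1 / (2 * μ) * t ^ 2 + (μ - μ') * L ^ 2 / 2 := by
    have : 0 ≤ (μ - μ') * (t - μ * L) ^ 2 / (2 * μ ^ 2) :=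
      div_nonneg (mul_nonneg (by linarith) (sq_nonneg _)) (by positivity)
    have e : 1 / (2 * μ) * t ^ 2 + (μ - μ') * L ^ 2 / 2
        - (L * ((1 - μ' / μ) * t) + μ' / (2 * μ ^ 2) * t ^ 2)
        = (μ - μ') * (t - μ * L) ^ 2 / (2 * μ ^ 2) := by
      field_simp; ring
    linarith
  calc moreauEnvelope g μ' z ≤ g u + 1 / (2 * μ') * ‖u - z‖ ^ 2 :=
        ciInf_le (bddBelow_range_objective hg hμ' z) u
    _ ≤ g w + 1 / (2 * μ) * t ^ 2 + (μ - μ') * L ^ 2 / 2 := by linarith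

lemma le_add_of_index_le (hg : ∀ a b, g a - g b ≤ L * ‖a - b‖) (hμ' : 0 < μ') (hle : μ' ≤ μ)
    (z : E) : moreauEnvelope g μ' z ≤ moreauEnvelope g μ z + (μ - μ') * L ^ 2 / 2 :=
  sub_le_iff_le_add.mp <| le_ciInf fun w =>
    sub_le_iff_le_add.mpr (le_objective_add hg hμ' hle z w)

end NormedSpace

end moreauEnvelope

lemma half_le_div_sq_le_two_mul {a s : ℝ} (ha : 0 ≤ a) (hs₀ : 0 ≤ s) (hs : s ≤ 1 / 2) :
    a / 2 ≤ a / (2 * (1 - s) ^ 2) ∧ a / (2 * (1 - s) ^ 2) ≤ 2 * a := by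
  have hsq : 1 / 4 ≤ (1 - s) ^ 2 := by nlinarith
  constructor
  · exact div_le_div_of_nonneg_left ha (by positivity) (by nlinarith)
  · calc a / (2 * (1 - s) ^ 2) ≤ a / (1 / 2) :=
          div_le_div_of_nonneg_left ha (by norm_num) (by linarith)
      _ = 2 * a := by ring

theorem stmt12_general {Z : Type*} [NormedAddCommGroup Z] [InnerProductSpace ℝ Z]
    (g : Z → ℝ) (η L : ℝ) (hη : 0 < η)
    (hLip : ∀ z₁ z₂ : Z, |g z₁ - g z₂| ≤ L * ‖z₁ - z₂‖)
    (μ μ' : ℝ) (hμ'pos : 0 < μ') (hle : μ' ≤ μ) (hμ : μ ≤ 1 / (2 * η)) (z : Z) :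
    (⨅ w : Z, (g w + (1 / (2 * μ)) * ‖w - z‖ ^ 2)) ≤
        (⨅ w : Z, (g w + (1 / (2 * μ')) * ‖w - z‖ ^ 2)) ∧
      (⨅ w : Z, (g w + (1 / (2 * μ')) * ‖w - z‖ ^ 2)) ≤
        (⨅ w : Z, (g w + (1 / (2 * μ)) * ‖w - z‖ ^ 2)) +
          (μ - μ') * L ^ 2 / (2 * (1 - μ * η) ^ 2) ∧
      (μ - μ') * L ^ 2 / (2 * (1 - μ * η) ^ 2) ≤ 2 * (μ - μ') * L ^ 2 := by
  have hg : ∀ a b, g a - g b ≤ L * ‖a - b‖ := fun a b => le_of_abs_le (hLip a b)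
  have hμη : μ * η ≤ 1 / 2 := by
    rw [le_div_iff₀ (by positivity)] at hμ; linarith
  obtain ⟨hhalf, htwo⟩ := half_le_div_sq_le_two_mul (a := (μ - μ') * L ^ 2)
    (by have := sub_nonneg.mpr hle; positivity) (mul_nonneg (hμ'pos.le.trans hle) hη.le) hμη
  exact ⟨moreauEnvelope.antitone_index hg hμ'pos hle z,
    (moreauEnvelope.le_add_of_index_le hg hμ'pos hle z).trans (add_le_add_right hhalf _),
    htwo.trans_eq (mul_assoc _ _ _).symm⟩

/-- monotonicity of Moreau envelopes in the index with quantitative control.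
For `g` η-weakly convex and `L`-Lipschitz and `0 < μ' ≤ μ ≤ 1/(2η)`:
`g^μ(z) ≤ g^{μ'}(z) ≤ g^μ(z) + (μ - μ')L²/(2(1 - μη)²) ≤ g^μ(z) + 2(μ - μ')L²`. -/
theorem stmt12 {Z : Type*} [NormedAddCommGroup Z] [InnerProductSpace ℝ Z]
    [FiniteDimensional ℝ Z]
    (g : Z → ℝ) (η L : ℝ) (hη : 0 < η)
    (hwc : ConvexOn ℝ Set.univ (fun z => g z + (η / 2) * ‖z‖ ^ 2))
    (hLip : ∀ z₁ z₂ : Z, |g z₁ - g z₂| ≤ L * ‖z₁ - z₂‖)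
    (μ μ' : ℝ) (hμ'pos : 0 < μ') (hle : μ' ≤ μ) (hμ : μ ≤ 1 / (2 * η)) (z : Z) :
    (⨅ w : Z, (g w + (1 / (2 * μ)) * ‖w - z‖ ^ 2)) ≤
        (⨅ w : Z, (g w + (1 / (2 * μ')) * ‖w - z‖ ^ 2)) ∧
      (⨅ w : Z, (g w + (1 / (2 * μ')) * ‖w - z‖ ^ 2)) ≤
        (⨅ w : Z, (g w + (1 / (2 * μ)) * ‖w - z‖ ^ 2)) +
          (μ - μ') * L ^ 2 / (2 * (1 - μ * η) ^ 2) ∧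
      (μ - μ') * L ^ 2 / (2 * (1 - μ * η) ^ 2) ≤ 2 * (μ - μ') * L ^ 2 :=
  stmt12_general g η L hη hLip μ μ' hμ'pos hle hμ z
end
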